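/- Let T be a complete theory, M a small model, and p a global M-invariant type such that (p ⊗ q)|_M = (q ⊗ p)|_M for every global type q finitely satisfiable in M. Then for every formula φ(x;y) over M there are formulas θ₀(y), θ₁(y) over M such that θ₀(M) ∪ θ₁(M) = M^{|y|} and for all a ∈ M^{|y|}: p ⊢ ¬φ(x;a) iff a ⊨ θ₀, and p ⊢ φ(x;a) iff a ⊨ θ₁. Consequently p is definable over M. -/

import Mathlib

open FirstOrder FirstOrder.Language

namespace Paper

variable {L : Language} {U : Type*} [L.Structure U]

/-- `a` realizes the formula `φ(x; d)` where `d` is a tuple of parameters from `U`. -/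
def Rz {γ : Type*} {n : ℕ} (a : γ → U) (φ : L.Formula (γ ⊕ Fin n)) (d : Fin n → U) : Prop :=
  φ.Realize (Sum.elim a d)

/-- A global type over the monster `U` in variables `γ` : a complete, finitely
satisfiable set of formulas with parameters from `U` (given as explicit tuples). -/
structure GType (L : Language) (U : Type*) [L.Structure U] (γ : Type*) where
  mem : ∀ {n : ℕ}, L.Formula (γ ⊕ Fin n) → (Fin n → U) → Prop
  complete : ∀ {n : ℕ} (φ : L.Formula (γ ⊕ Fin n)) (d : Fin n → U), mem φ d ∨ mem φ.not d
  finSat : ∀ (s : List (Σ n : ℕ, L.Formula (γ ⊕ Fin n) × (Fin n → U))),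
    (∀ x ∈ s, mem x.2.1 x.2.2) → ∃ a : γ → U, ∀ x ∈ s, Rz a x.2.1 x.2.2

/-- `a ≡_A b` : same type over the parameter set `A`. -/
def SameTypeOver (A : Set U) {γ : Type*} (a b : γ → U) : Prop :=
  ∀ {j : ℕ} (ψ : L.Formula (γ ⊕ Fin j)) (e : Fin j → U), (∀ i, e i ∈ A) →
    (Rz a ψ e ↔ Rz b ψ e)

/-- A global type is `A`-invariant. -/
def Invariant (A : Set U) {γ : Type*} (p : GType L U γ) : Prop :=
  ∀ {n : ℕ} (φ : L.Formula (γ ⊕ Fin n)) (d d' : Fin n → U),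
    SameTypeOver (L := L) A d d' → (p.mem φ d ↔ p.mem φ d')

/-- A global type is finitely satisfiable in `A` : every formula in it has a
realization with coordinates from `A`. -/
def FinSatIn (A : Set U) {γ : Type*} (p : GType L U γ) : Prop :=
  ∀ {n : ℕ} (φ : L.Formula (γ ⊕ Fin n)) (d : Fin n → U), p.mem φ d →
    ∃ a : γ → U, (∀ i, a i ∈ A) ∧ Rz a φ d

/-- A global type is definable over `A`. -/
def DefinableOver (A : Set U) {γ : Type*} (p : GType L U γ) : Prop :=
  ∀ {n : ℕ} (φ : L.Formula (γ ⊕ Fin n)), ∃ (j : ℕ) (e : Fin j → U),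
    (∀ i, e i ∈ A) ∧ ∃ ψ : L.Formula (Fin n ⊕ Fin j),
      ∀ d : Fin n → U, (p.mem φ d ↔ ψ.Realize (Sum.elim d e))

/-- `a ⊨ p|_A` : the tuple `a` realizes the restriction of `p` to parameters in `A`. -/
def RealizesOver {γ : Type*} (p : GType L U γ) (a : γ → U) (A : Set U) : Prop :=
  ∀ {n : ℕ} (φ : L.Formula (γ ⊕ Fin n)) (d : Fin n → U), (∀ i, d i ∈ A) →
    p.mem φ d → Rz a φ d

/-- Substitute a tuple of parameters for the second variable block `y` of
`φ(x, y; z)`, producing a formula `φ(x; y⌢z)`. -/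
def substY {m k n : ℕ} (φ : L.Formula ((Fin m ⊕ Fin k) ⊕ Fin n)) :
    L.Formula (Fin m ⊕ Fin (k + n)) :=
  φ.relabel (Sum.elim (Sum.map id (Fin.castAdd n)) (fun j => Sum.inr (Fin.natAdd k j)))

/-- Substitute a tuple of parameters for the first variable block `x` of
`φ(x, y; z)`, producing a formula `φ(y; x⌢z)`. -/
def substX {m k n : ℕ} (φ : L.Formula ((Fin m ⊕ Fin k) ⊕ Fin n)) :
    L.Formula (Fin k ⊕ Fin (m + n)) :=
  φ.relabel (Sum.elim (Sum.elim (fun i => Sum.inr (Fin.castAdd n i)) Sum.inl)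
    (fun j => Sum.inr (Fin.natAdd m j)))

/-- Membership `φ(x,y;d) ∈ p(x) ⊗ q(y)` for an `A`-invariant type `p` :
for any `b ⊨ q|_{A ∪ d}` (in the monster), `φ(x, b; d) ∈ p`. -/
def ProdMem (A : Set U) {m k : ℕ} (p : GType L U (Fin m)) (q : GType L U (Fin k))
    {n : ℕ} (φ : L.Formula ((Fin m ⊕ Fin k) ⊕ Fin n)) (d : Fin n → U) : Prop :=
  ∀ b : Fin k → U, RealizesOver q b (A ∪ Set.range d) → p.mem (substY φ) (Fin.append b d)

/-- Membership `φ(x,y;d) ∈ q(y) ⊗ p(x)` (variables kept in the order `x, y`). -/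
def ProdMemRev (A : Set U) {m k : ℕ} (p : GType L U (Fin m)) (q : GType L U (Fin k))
    {n : ℕ} (φ : L.Formula ((Fin m ⊕ Fin k) ⊕ Fin n)) (d : Fin n → U) : Prop :=
  ∀ a : Fin m → U, RealizesOver p a (A ∪ Set.range d) → q.mem (substX φ) (Fin.append a d)

/-- `p ⊗ q = q ⊗ p` as global types. -/
def Commute (A : Set U) {m k : ℕ} (p : GType L U (Fin m)) (q : GType L U (Fin k)) : Prop :=
  ∀ {n : ℕ} (φ : L.Formula ((Fin m ⊕ Fin k) ⊕ Fin n)) (d : Fin n → U),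
    ProdMem A p q φ d ↔ ProdMemRev A p q φ d

/-- `(p ⊗ q)|_B = (q ⊗ p)|_B` : the products agree on parameters from `B`. -/
def CommuteOn (A B : Set U) {m k : ℕ} (p : GType L U (Fin m)) (q : GType L U (Fin k)) : Prop :=
  ∀ {n : ℕ} (φ : L.Formula ((Fin m ⊕ Fin k) ⊕ Fin n)) (d : Fin n → U), (∀ i, d i ∈ B) →
    (ProdMem A p q φ d ↔ ProdMemRev A p q φ d)

/-- A sequence of `k`-tuples indexed by a linear order is indiscernible over `A`. -/
def IndiscOver (A : Set U) {ι : Type*} [LinearOrder ι] {k : ℕ} (b : ι → Fin k → U) : Prop :=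
  ∀ (j r : ℕ) (ψ : L.Formula ((Fin j × Fin k) ⊕ Fin r)) (e : Fin r → U), (∀ i, e i ∈ A) →
    ∀ f g : Fin j → ι, StrictMono f → StrictMono g →
      (ψ.Realize (Sum.elim (fun v => b (f v.1) v.2) e) ↔
        ψ.Realize (Sum.elim (fun v => b (g v.1) v.2) e))

/-- Two sequences are mutually indiscernible over `A`. -/
def MutIndisc (A : Set U) {k₀ k₁ : ℕ} (I : ℕ → Fin k₀ → U) (J : ℕ → Fin k₁ → U) : Prop :=
  IndiscOver (L := L) (A ∪ ⋃ t, Set.range (J t)) I ∧ IndiscOver (L := L) (A ∪ ⋃ t, Set.range (I t)) J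

/-- The formula `φ(x; d)` divides over `A`. -/
def Divides (A : Set U) {γ : Type*} {n : ℕ} (φ : L.Formula (γ ⊕ Fin n)) (d : Fin n → U) : Prop :=
  ∃ I : ℕ → Fin n → U, I 0 = d ∧ IndiscOver (L := L) A I ∧ ¬ ∃ a : γ → U, ∀ t, Rz a φ (I t)

/-- The formula `φ(x; d)` forks over `A` : it implies a finite disjunction of
formulas dividing over `A`. -/
def Forks (A : Set U) {γ : Type*} {n : ℕ} (φ : L.Formula (γ ⊕ Fin n)) (d : Fin n → U) : Prop :=
  ∃ s : List (Σ m : ℕ, L.Formula (γ ⊕ Fin m) × (Fin m → U)),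
    (∀ x ∈ s, Divides A x.2.1 x.2.2) ∧
    ∀ a : γ → U, Rz a φ d → ∃ x ∈ s, Rz a x.2.1 x.2.2

/-- The (complete theory of the monster) is NIP : no formula has the independence property. -/
def IsNIP (L : Language) (U : Type*) [L.Structure U] : Prop :=
  ∀ (m n : ℕ) (φ : L.Formula (Fin m ⊕ Fin n)),
    ¬ ∃ (a : ℕ → Fin m → U) (b : Finset ℕ → Fin n → U),
      ∀ (i : ℕ) (s : Finset ℕ), (φ.Realize (Sum.elim (a i) (b s)) ↔ i ∈ s)

/-- dp-minimality : every singleton has dp-rank 1. -/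
def IsDpMinimal (L : Language) (U : Type*) [L.Structure U] : Prop :=
  ∀ (A : Set U) (c : U) {k₀ k₁ : ℕ} (I : ℕ → Fin k₀ → U) (J : ℕ → Fin k₁ → U),
    MutIndisc (L := L) A I J →
      IndiscOver (L := L) (A ∪ {c}) I ∨ IndiscOver (L := L) (A ∪ {c}) J

/-- Every type (set of formulas, in `k` free variables, with parameters from `A`)
which is finitely satisfiable in `U` is realized in `U`. -/
def RealizesTypesOver (L : Language) (U : Type*) [L.Structure U] (A : Set U) : Prop :=
  ∀ (k : ℕ) (S : Set (Σ n : ℕ, L.Formula (Fin k ⊕ Fin n) × (Fin n → U))),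
    (∀ x ∈ S, ∀ i, x.2.2 i ∈ A) →
    (∀ s : List (Σ n : ℕ, L.Formula (Fin k ⊕ Fin n) × (Fin n → U)),
      (∀ x ∈ s, x ∈ S) → ∃ a : Fin k → U, ∀ x ∈ s, Rz a x.2.1 x.2.2) →
    ∃ a : Fin k → U, ∀ x ∈ S, Rz a x.2.1 x.2.2

/-- Same, but the realization is found inside the set `N`. -/
def RealizesTypesOverIn (L : Language) (U : Type*) [L.Structure U] (A N : Set U) : Prop :=
  ∀ (k : ℕ) (S : Set (Σ n : ℕ, L.Formula (Fin k ⊕ Fin n) × (Fin n → U))),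
    (∀ x ∈ S, ∀ i, x.2.2 i ∈ A) →
    (∀ s : List (Σ n : ℕ, L.Formula (Fin k ⊕ Fin n) × (Fin n → U)),
      (∀ x ∈ s, x ∈ S) → ∃ a : Fin k → U, ∀ x ∈ s, Rz a x.2.1 x.2.2) →
    ∃ a : Fin k → U, (∀ i, a i ∈ N) ∧ ∀ x ∈ S, Rz a x.2.1 x.2.2

/-- `U` is a monster model relative to the small set `A` : it realizes all types
over `A` together with countably many extra parameters. -/
def Monster (L : Language) (U : Type*) [L.Structure U] (A : Set U) : Prop :=
  ∀ (e : ℕ → U), RealizesTypesOver L U (A ∪ Set.range e)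

/-- `M ≺⁺ N` (as subsets of the monster `U`) : `N` contains `M` and realizes (inside
itself) all types over `M` together with countably many extra parameters from `N`. -/
def SatPair (L : Language) (U : Type*) [L.Structure U] (M N : Set U) : Prop :=
  M ⊆ N ∧ ∀ (e : ℕ → U), (∀ i, e i ∈ N) → RealizesTypesOverIn L U (M ∪ Set.range e) N

end Paper

/-!
For an ultrafilter `𝒰` on `M`-tuples let `q_𝒰` be the global coheir it determines, and let
`b ⊨ q_𝒰|_M`. Evaluating `p ⊗ q_𝒰 = q_𝒰 ⊗ p` at `φ(x; y)` gives
`φ(x; b) ∈ p ↔ {c ∈ M | φ(x; c) ∈ p} ∈ 𝒰`. By `M`-invariance of `p` the left side depends only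
on `tp(b/M)`, i.e. on the `M`-definable sets in `𝒰`; by compactness of the Stone space of the
algebra of `M`-definable sets, `{c ∈ M | φ(x; c) ∈ p}` is then the trace on `M` of an
`M`-definable set `Y`. Choosing `𝒰` to be a coheir of `tp(d/M)` for an arbitrary tuple `d` shows
`φ(x; d) ∈ p ↔ d ∈ Y`, so `Y` defines `φ` in `p`, and `θ₁ = Y`, `θ₀ = ¬Y`.
-/

open Set Filter

theorem Ultrafilter.exists_forall_mem_of_directed {α ι : Type*} [Nonempty ι] {s : ι → Set α}
    (hd : Directed (· ⊇ ·) s) (hne : ∀ i, (s i).Nonempty) :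
    ∃ 𝒰 : Ultrafilter α, ∀ i, s i ∈ 𝒰 := by
  have : (⨅ i, 𝓟 (s i)).NeBot :=
    iInf_neBot_of_directed' (fun i j => (hd i j).imp fun _ hk => ⟨principal_mono.2 hk.1,
      principal_mono.2 hk.2⟩) fun i => principal_neBot_iff.2 (hne i)
  exact ⟨.of _, fun i => Ultrafilter.of_le _ (mem_iInf_of_mem i (mem_principal_self _))⟩

namespace BooleanSubalgebra

variable {α : Type*} (D : BooleanSubalgebra (Set α))

theorem exists_ultrafilter_mem_of_inter_nonempty (𝒰 : Ultrafilter α) {N : Set α}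
    (hN : ∀ Y ∈ D, Y ∈ 𝒰 → (Y ∩ N).Nonempty) :
    ∃ 𝒰' : Ultrafilter α, N ∈ 𝒰' ∧ ∀ Y ∈ D, Y ∈ 𝒰' ↔ Y ∈ 𝒰 := by
  have : Nonempty {Y // Y ∈ D ∧ Y ∈ 𝒰} := ⟨⟨univ, D.top_mem, univ_mem⟩⟩
  obtain ⟨𝒰', h𝒰'⟩ := Ultrafilter.exists_forall_mem_of_directed
    (s := fun Y : {Y // Y ∈ D ∧ Y ∈ 𝒰} => Y.1 ∩ N)
    (fun Y Z => ⟨⟨Y.1 ∩ Z.1, D.inf_mem Y.2.1 Z.2.1, inter_mem Y.2.2 Z.2.2⟩,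
      inter_subset_inter_left _ inter_subset_left, inter_subset_inter_left _ inter_subset_right⟩)
    fun Y => hN Y.1 Y.2.1 Y.2.2
  have hsub : ∀ Y ∈ D, Y ∈ 𝒰 → Y ∈ 𝒰' := fun Y hY hY𝒰 =>
    mem_of_superset (h𝒰' ⟨Y, hY, hY𝒰⟩) inter_subset_left
  refine ⟨𝒰', mem_of_superset (h𝒰' ⟨univ, D.top_mem, univ_mem⟩) inter_subset_right,
    fun Y hY => ⟨fun hY𝒰' => ?_, hsub Y hY⟩⟩
  by_contra hY𝒰
  exact Ultrafilter.compl_notMem_iff.2 hY𝒰'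
    (hsub _ (D.compl_mem hY) (Ultrafilter.compl_mem_iff_notMem.2 hY𝒰))

/-- Compactness of the Stone space of `D`. -/
theorem exists_inter_eq_of_ultrafilter {X S : Set α}
    (h : ∀ 𝒰 𝒰' : Ultrafilter α, X ∈ 𝒰 → X ∈ 𝒰' → (∀ Y ∈ D, Y ∈ 𝒰' ↔ Y ∈ 𝒰) →
      S ∈ 𝒰 → S ∈ 𝒰') :
    ∃ Y ∈ D, Y ∩ X = S ∩ X := by
  have hsep : ∀ 𝒰 : Ultrafilter α, S ∩ X ∈ 𝒰 → ∃ Y ∈ D, Y ∈ 𝒰 ∧ Y ∩ X ⊆ S := by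
    intro 𝒰 h𝒰
    by_contra! hY
    obtain ⟨𝒰', hN, hD⟩ := D.exists_ultrafilter_mem_of_inter_nonempty 𝒰 (N := X \ S)
      fun Y hY' hY𝒰 => by
        obtain ⟨x, ⟨hxY, hxX⟩, hxS⟩ := not_subset.1 (hY Y hY' hY𝒰)
        exact ⟨x, hxY, hxX, hxS⟩
    have hS := h 𝒰 𝒰' (mem_of_superset h𝒰 inter_subset_right)
      (mem_of_superset hN sdiff_subset) hD (mem_of_superset h𝒰 inter_subset_left)
    obtain ⟨x, hxS, -, hxS'⟩ := Ultrafilter.nonempty_of_mem (inter_mem hS hN)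
    exact hxS' hxS
  -- otherwise some ultrafilter contains `S ∩ X` but no `Y ∈ D` with `Y ∩ X ⊆ S`
  by_contra! hne
  have : Nonempty {Y // Y ∈ D ∧ Y ∩ X ⊆ S} := ⟨⟨∅, D.bot_mem, by simp⟩⟩
  obtain ⟨𝒰, h𝒰⟩ := Ultrafilter.exists_forall_mem_of_directed
    (s := fun Y : {Y // Y ∈ D ∧ Y ∩ X ⊆ S} => (S ∩ X) \ Y.1)
    (fun Y Z => ⟨⟨Y.1 ∪ Z.1, D.sup_mem Y.2.1 Z.2.1, by
        rw [union_inter_distrib_right]; exact union_subset Y.2.2 Z.2.2⟩,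
      sdiff_subset_sdiff_right subset_union_left, sdiff_subset_sdiff_right subset_union_right⟩)
    fun Y => by
      refine nonempty_iff_ne_empty.2 fun hY => hne Y.1 Y.2.1 (subset_antisymm ?_ ?_)
      · exact subset_inter Y.2.2 inter_subset_right
      · exact subset_inter (sdiff_eq_empty.1 hY) inter_subset_right
  obtain ⟨Y, hYD, hY𝒰, hYS⟩ := hsep 𝒰 (mem_of_superset (h𝒰 ⟨∅, D.bot_mem, by simp⟩) sdiff_subset)
  obtain ⟨x, hxY, -, hxY'⟩ := Ultrafilter.nonempty_of_mem (inter_mem hY𝒰 (h𝒰 ⟨Y, hYD, hYS⟩))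
  exact hxY' hxY

end BooleanSubalgebra

namespace Paper

variable {L : Language} {U : Type*} [L.Structure U]

namespace GType

variable {γ : Type*} (t : GType L U γ) {n n' : ℕ} {φ : L.Formula (γ ⊕ Fin n)} {d : Fin n → U}

theorem mem_of_forall_rz_imp {ψ : L.Formula (γ ⊕ Fin n')} {d' : Fin n' → U}
    (h : ∀ x : γ → U, Rz x φ d → Rz x ψ d') (hφ : t.mem φ d) : t.mem ψ d' := by
  refine (t.complete ψ d').resolve_right fun hψ => ?_
  obtain ⟨a, ha⟩ := t.finSat [⟨_, φ, d⟩, ⟨_, ψ.not, d'⟩] (by simp [hφ, hψ])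
  exact ha ⟨_, ψ.not, d'⟩ (by simp) (h a (ha ⟨_, φ, d⟩ (by simp)))

theorem mem_congr {ψ : L.Formula (γ ⊕ Fin n')} {d' : Fin n' → U}
    (h : ∀ x : γ → U, Rz x φ d ↔ Rz x ψ d') : t.mem φ d ↔ t.mem ψ d' :=
  ⟨t.mem_of_forall_rz_imp fun x => (h x).1, t.mem_of_forall_rz_imp fun x => (h x).2⟩

theorem mem_not_iff : t.mem φ.not d ↔ ¬ t.mem φ d := by
  refine ⟨fun hn h => ?_, (t.complete φ d).resolve_left⟩
  obtain ⟨a, ha⟩ := t.finSat [⟨_, φ, d⟩, ⟨_, φ.not, d⟩] (by simp [h, hn])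
  exact ha ⟨_, φ.not, d⟩ (by simp) (ha ⟨_, φ, d⟩ (by simp))

end GType

namespace RealizesOver

variable {γ : Type*} {A : Set U} {t t' : GType L U γ} {a b : γ → U}

theorem rz_iff (ha : RealizesOver t a A) {j : ℕ} (ψ : L.Formula (γ ⊕ Fin j)) {e : Fin j → U}
    (he : ∀ i, e i ∈ A) : Rz a ψ e ↔ t.mem ψ e :=
  ⟨fun h => (t.complete ψ e).resolve_right fun hn => ha ψ.not e he hn h, ha ψ e he⟩

theorem sameTypeOver (ha : RealizesOver t a A) (hb : RealizesOver t' b A)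
    (htt' : ∀ {j : ℕ} (ψ : L.Formula (γ ⊕ Fin j)) (e : Fin j → U), (∀ i, e i ∈ A) →
      (t.mem ψ e ↔ t'.mem ψ e)) :
    SameTypeOver (L := L) A a b := fun ψ e he =>
  (ha.rz_iff ψ he).trans ((htt' ψ e he).trans (hb.rz_iff ψ he).symm)

end RealizesOver

theorem exists_realizesOver {A : Set U} (hmon : Monster L U A) {k : ℕ} (t : GType L U (Fin k)) :
    ∃ b, RealizesOver t b A := by
  rcases isEmpty_or_nonempty U with hU | ⟨⟨u⟩⟩
  · -- `Fin k → U` is a subsingleton, inhabited by `t.finSat []`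
    obtain ⟨b, -⟩ := t.finSat [] (by simp)
    refine ⟨b, fun φ d _ hφ => ?_⟩
    obtain ⟨b', hb'⟩ := t.finSat [⟨_, φ, d⟩] (by simpa using hφ)
    exact Subsingleton.elim b' b ▸ hb' ⟨_, φ, d⟩ (by simp)
  · obtain ⟨b, hb⟩ := hmon (fun _ => u) k {x | (∀ i, x.2.2 i ∈ A) ∧ t.mem x.2.1 x.2.2}
      (fun x hx i => Or.inl (hx.1 i)) (fun s hs => t.finSat s fun x hx => (hs x hx).2)
    exact ⟨b, fun φ d hd hφ => hb ⟨_, φ, d⟩ ⟨hd, hφ⟩⟩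

section Definable

variable {n j₁ j₂ : ℕ}

theorem rz_relabel_castAdd (ψ : L.Formula (Fin n ⊕ Fin j₁)) (c : Fin n → U) (e₁ : Fin j₁ → U)
    (e₂ : Fin j₂ → U) :
    Rz c (ψ.relabel (Sum.map id (Fin.castAdd j₂))) (Fin.append e₁ e₂) ↔ Rz c ψ e₁ := by
  unfold Rz
  rw [Formula.realize_relabel]
  congr! 1
  ext (i | i) <;> simp

theorem rz_relabel_natAdd (ψ : L.Formula (Fin n ⊕ Fin j₂)) (c : Fin n → U) (e₁ : Fin j₁ → U)
    (e₂ : Fin j₂ → U) :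
    Rz c (ψ.relabel (Sum.map id (Fin.natAdd j₁))) (Fin.append e₁ e₂) ↔ Rz c ψ e₂ := by
  unfold Rz
  rw [Formula.realize_relabel]
  congr! 1
  ext (i | i) <;> simp

theorem forall_append_mem {A : Set U} {e₁ : Fin j₁ → U} {e₂ : Fin j₂ → U}
    (he₁ : ∀ i, e₁ i ∈ A) (he₂ : ∀ i, e₂ i ∈ A) : ∀ i, Fin.append e₁ e₂ i ∈ A :=
  Fin.addCases (by simpa using he₁) (by simpa using he₂)

variable (L) in
def definableSets (A : Set U) (n : ℕ) : BooleanSubalgebra (Set (Fin n → U)) where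
  carrier := {X | ∃ (j : ℕ) (e : Fin j → U) (ψ : L.Formula (Fin n ⊕ Fin j)),
    (∀ i, e i ∈ A) ∧ X = {c | Rz c ψ e}}
  supClosed' := by
    rintro _ ⟨j₁, e₁, ψ₁, he₁, rfl⟩ _ ⟨j₂, e₂, ψ₂, he₂, rfl⟩
    refine ⟨_, _, ψ₁.relabel (Sum.map id (Fin.castAdd j₂)) ⊔
      ψ₂.relabel (Sum.map id (Fin.natAdd j₁)), forall_append_mem he₁ he₂, ?_⟩
    ext c
    simp only [Set.sup_eq_union, mem_union, mem_ofPred_eq, Rz, Formula.realize_sup]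
    exact (or_congr (rz_relabel_castAdd ψ₁ c e₁ e₂) (rz_relabel_natAdd ψ₂ c e₁ e₂)).symm
  infClosed' := by
    rintro _ ⟨j₁, e₁, ψ₁, he₁, rfl⟩ _ ⟨j₂, e₂, ψ₂, he₂, rfl⟩
    refine ⟨_, _, ψ₁.relabel (Sum.map id (Fin.castAdd j₂)) ⊓
      ψ₂.relabel (Sum.map id (Fin.natAdd j₁)), forall_append_mem he₁ he₂, ?_⟩
    ext c
    simp only [Set.inf_eq_inter, mem_inter_iff, mem_ofPred_eq, Rz, Formula.realize_inf]
    exact (and_congr (rz_relabel_castAdd ψ₁ c e₁ e₂) (rz_relabel_natAdd ψ₂ c e₁ e₂)).symm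
  compl_mem' := by
    rintro _ ⟨j, e, ψ, he, rfl⟩
    exact ⟨j, e, ψ.not, he, rfl⟩
  bot_mem' := ⟨0, finZeroElim, ⊥, finZeroElim, by ext; simp [Rz]⟩

theorem setOf_rz_mem_definableSets {A : Set U} {j : ℕ} (ψ : L.Formula (Fin n ⊕ Fin j))
    {e : Fin j → U} (he : ∀ i, e i ∈ A) : {c | Rz c ψ e} ∈ definableSets L A n :=
  ⟨j, e, ψ, he, rfl⟩

/-- The Tarski–Vaught property of `M`, for `n`-tuples. -/
theorem inter_nonempty_of_mem_definableSets (M : L.ElementarySubstructure U)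
    {Y : Set (Fin n → U)} (hY : Y ∈ definableSets L M n) (hne : Y.Nonempty) :
    (Y ∩ {c | ∀ i, c i ∈ M}).Nonempty := by
  obtain ⟨j, e, ψ, he, rfl⟩ := hY
  obtain ⟨c, hc⟩ := hne
  let eM : Fin j → M := fun i => ⟨e i, he i⟩
  have hM : ((ψ.relabel Sum.swap).iExs (Fin n)).Realize eM := by
    rw [← M.subtype.map_formula, ElementarySubstructure.coe_subtype, Formula.realize_iExs]
    exact ⟨c, by rwa [Formula.realize_relabel, Sum.elim_swap]⟩
  obtain ⟨cM, hcM⟩ := Formula.realize_iExs.1 hM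
  rw [Formula.realize_relabel, Sum.elim_swap, ← M.subtype.map_formula,
    ElementarySubstructure.coe_subtype] at hcM
  have hval : Subtype.val ∘ Sum.elim cM eM = Sum.elim (fun i => (cM i : U)) e := by
    ext (i | i) <;> rfl
  exact ⟨fun i => cM i, by rwa [hval] at hcM, fun i => (cM i).2⟩

end Definable

section Coheir

variable {m n : ℕ}

def GType.ofUltrafilter (L : Language) [L.Structure U] (𝒰 : Ultrafilter (Fin n → U)) :
    GType L U (Fin n) where
  mem ψ d := {b | Rz b ψ d} ∈ 𝒰
  complete _ _ := (em _).imp_right Ultrafilter.compl_mem_iff_notMem.2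
  finSat s hs := ((eventually_all_finite s.finite_toSet).2 hs).exists

theorem GType.finSatIn_ofUltrafilter {A : Set U} {𝒰 : Ultrafilter (Fin n → U)}
    (hA : {c | ∀ i, c i ∈ A} ∈ 𝒰) : FinSatIn A (GType.ofUltrafilter L 𝒰) := fun _ _ hψ =>
  (𝒰.nonempty_of_mem (inter_mem hA hψ)).imp fun _ hb => hb

theorem exists_ultrafilter_coheir (M : L.ElementarySubstructure U) (d : Fin n → U) :
    ∃ 𝒰 : Ultrafilter (Fin n → U), {c | ∀ i, c i ∈ M} ∈ 𝒰 ∧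
      ∀ Y ∈ definableSets L M n, Y ∈ 𝒰 ↔ d ∈ Y :=
  (definableSets L M n).exists_ultrafilter_mem_of_inter_nonempty (pure d)
    fun _ hY hdY => inter_nonempty_of_mem_definableSets M hY ⟨d, hdY⟩

theorem rz_substY_relabel_inl (φ : L.Formula (Fin m ⊕ Fin n)) (a : Fin m → U)
    (b : Fin n → U) :
    Rz a (substY (φ.relabel Sum.inl)) (Fin.append b (finZeroElim : Fin 0 → U)) ↔ Rz a φ b := by
  unfold Rz substY
  rw [Formula.realize_relabel, Formula.realize_relabel]
  congr! 1
  ext (i | i)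
  exacts [rfl, Fin.append_left b _ i]

theorem rz_substX_relabel_inl (φ : L.Formula (Fin m ⊕ Fin n)) (a : Fin m → U)
    (b : Fin n → U) :
    Rz b (substX (φ.relabel Sum.inl)) (Fin.append a (finZeroElim : Fin 0 → U)) ↔ Rz a φ b := by
  unfold Rz substX
  rw [Formula.realize_relabel, Formula.realize_relabel]
  congr! 1
  ext (i | i)
  exacts [Fin.append_left a _ i, rfl]

/-- Evaluated at `φ(x; y)`, the product `p ⊗ q` gives `φ(x; b) ∈ p` and `q ⊗ p` gives
`{c | φ(x; c) ∈ p} ∈ 𝒰`. -/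
theorem mem_iff_setOf_mem_ultrafilter {A : Set U} (hmon : Monster L U A) {p : GType L U (Fin m)}
    (hinv : Invariant A p) {𝒰 : Ultrafilter (Fin n → U)}
    (hcomm : CommuteOn A A p (GType.ofUltrafilter L 𝒰)) (hA : {c | ∀ i, c i ∈ A} ∈ 𝒰)
    (φ : L.Formula (Fin m ⊕ Fin n)) {b : Fin n → U}
    (hb : RealizesOver (GType.ofUltrafilter L 𝒰) b A) :
    p.mem φ b ↔ {c | p.mem φ c} ∈ 𝒰 := by
  have hA₀ : A ∪ range (finZeroElim : Fin 0 → U) = A := by simp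
  have hprod : ProdMem A p (GType.ofUltrafilter L 𝒰) (φ.relabel Sum.inl) finZeroElim ↔
      p.mem φ b := by
    simp only [ProdMem, hA₀, p.mem_congr (rz_substY_relabel_inl φ · _)]
    exact ⟨fun h => h b hb, fun h b' hb' =>
      (hinv φ b' b (hb'.sameTypeOver hb fun _ _ _ => Iff.rfl)).2 h⟩
  have hprodRev : ProdMemRev A p (GType.ofUltrafilter L 𝒰) (φ.relabel Sum.inl) finZeroElim ↔
      {c | p.mem φ c} ∈ 𝒰 := by
    have hslice : ∀ a, RealizesOver p a A → ((GType.ofUltrafilter L 𝒰).mem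
        (substX (φ.relabel Sum.inl)) (Fin.append a finZeroElim) ↔ {c | p.mem φ c} ∈ 𝒰) :=
      fun a ha => eventually_congr (mem_of_superset hA fun c hc =>
        (rz_substX_relabel_inl φ a c).trans (ha.rz_iff φ hc))
    obtain ⟨a₀, ha₀⟩ := exists_realizesOver hmon p
    simp only [ProdMemRev, hA₀]
    exact ⟨fun h => (hslice a₀ ha₀).1 (h a₀ ha₀), fun h a ha => (hslice a ha).2 h⟩
  exact hprod.symm.trans ((hcomm _ _ finZeroElim).trans hprodRev)

end Coheir

theorem exists_mem_definableSets_mem_iff (M : L.ElementarySubstructure U)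
    (hmon : Monster L U (M : Set U)) {m : ℕ} {p : GType L U (Fin m)}
    (hinv : Invariant (M : Set U) p)
    (hcomm : ∀ (k : ℕ) (q : GType L U (Fin k)), FinSatIn (M : Set U) q →
      CommuteOn (M : Set U) (M : Set U) p q)
    {n : ℕ} (φ : L.Formula (Fin m ⊕ Fin n)) :
    ∃ Y ∈ definableSets L M n, ∀ d, p.mem φ d ↔ d ∈ Y := by
  set X : Set (Fin n → U) := {c | ∀ i, c i ∈ M}
  set S : Set (Fin n → U) := {c | p.mem φ c}
  have key : ∀ 𝒰 : Ultrafilter (Fin n → U), X ∈ 𝒰 → ∀ b,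
      RealizesOver (GType.ofUltrafilter L 𝒰) b M → (p.mem φ b ↔ S ∈ 𝒰) := fun 𝒰 hX _ hb =>
    mem_iff_setOf_mem_ultrafilter hmon hinv (hcomm _ _ (GType.finSatIn_ofUltrafilter hX)) hX φ hb
  obtain ⟨Y, hYD, hY⟩ := (definableSets L M n).exists_inter_eq_of_ultrafilter (X := X) (S := S)
    fun 𝒰 𝒰' hX hX' hD hS => by
      obtain ⟨b, hb⟩ := exists_realizesOver hmon (GType.ofUltrafilter L 𝒰)
      obtain ⟨b', hb'⟩ := exists_realizesOver hmon (GType.ofUltrafilter L 𝒰')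
      have hbb' : SameTypeOver (L := L) M b' b :=
        hb'.sameTypeOver hb fun ψ _ he => hD _ (setOf_rz_mem_definableSets ψ he)
      exact (key 𝒰' hX' b' hb').1 ((hinv φ b' b hbb').2 ((key 𝒰 hX b hb).2 hS))
  refine ⟨Y, hYD, fun d => ?_⟩
  obtain ⟨𝒰, hX, hD⟩ := exists_ultrafilter_coheir M d
  have hd : RealizesOver (GType.ofUltrafilter L 𝒰) d M := fun ψ _ he hψ =>
    (hD _ (setOf_rz_mem_definableSets ψ he)).1 hψ
  have hXmem : ∀ T, T ∩ X ∈ 𝒰 ↔ T ∈ 𝒰 := fun _ => inter_mem_iff.trans (and_iff_left hX)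
  calc p.mem φ d ↔ S ∈ 𝒰 := key 𝒰 hX d hd
    _ ↔ S ∩ X ∈ 𝒰 := (hXmem S).symm
    _ ↔ Y ∈ 𝒰 := by rw [← hY, hXmem]
    _ ↔ d ∈ Y := hD Y hYD

end Paper

open Paper in
/-- If a global `M`-invariant type `p` satisfies
`(p ⊗ q)|_M = (q ⊗ p)|_M` for every global type `q` finitely satisfiable in `M`,
then for each `φ(x;y)` there are `M`-formulas `θ₀, θ₁` covering `M^{|y|}` such that
for `a ∈ M^{|y|}` : `¬φ(x;a) ∈ p ↔ a ⊨ θ₀` and `φ(x;a) ∈ p ↔ a ⊨ θ₁`.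
Consequently `p` is definable over `M`. -/
theorem stmt_2 {L : Language} {U : Type*} [L.Structure U]
    (M : L.ElementarySubstructure U) (hmon : Monster L U (M : Set U))
    {m : ℕ} (p : GType L U (Fin m)) (hinv : Invariant (M : Set U) p)
    (hcomm : ∀ (k : ℕ) (q : GType L U (Fin k)), FinSatIn (M : Set U) q →
      CommuteOn (M : Set U) (M : Set U) p q) :
    (∀ {n : ℕ} (φ : L.Formula (Fin m ⊕ Fin n)),
      ∃ (j : ℕ) (e : Fin j → U), (∀ i, e i ∈ M) ∧
        ∃ θ₀ θ₁ : L.Formula (Fin n ⊕ Fin j),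
          (∀ a : Fin n → U, (∀ i, a i ∈ M) →
            θ₀.Realize (Sum.elim a e) ∨ θ₁.Realize (Sum.elim a e)) ∧
          (∀ a : Fin n → U, (∀ i, a i ∈ M) →
            ((p.mem φ.not a ↔ θ₀.Realize (Sum.elim a e)) ∧
             (p.mem φ a ↔ θ₁.Realize (Sum.elim a e)))))
    ∧ DefinableOver (M : Set U) p := by
  have hdef : DefinableOver (M : Set U) p := fun φ => by
    obtain ⟨_, ⟨j, e, ψ, he, rfl⟩, hψ⟩ := exists_mem_definableSets_mem_iff M hmon hinv hcomm φ
    exact ⟨j, e, he, ψ, hψ⟩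
  refine ⟨fun φ => ?_, hdef⟩
  obtain ⟨j, e, he, ψ, hψ⟩ := hdef φ
  refine ⟨j, e, he, ψ.not, ψ, fun a _ => (em _).symm, fun a _ => ⟨?_, hψ a⟩⟩
  rw [p.mem_not_iff, hψ, Formula.realize_not]
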